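/- Let n ≥ 1 and k ≥ 0 be integers. The map α defined by α((x,y),(x',y')) = (x + x' + 3xx' + 3xy' + 3yx', y + y' − 3xx' + 3yy') is a bijection from C_n × C_{n+3^k} onto C_{3n²+(3^{k+1}+2)n+3^k}. -/

import Mathlib

/-- `C n` is the set of characteristic vectors of 3-core partitions of `n`. -/
def C (n : ℤ) : Set (ℤ × ℤ) :=
  {p | 3 * p.1 ^ 2 + 3 * p.1 * p.2 + 3 * p.2 ^ 2 + p.1 + 2 * p.2 = n}

/-- The map `α((x,y),(x',y')) = (x + x' + 3xx' + 3xy' + 3yx', y + y' - 3xx' + 3yy')`. -/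
def alphaMap : (ℤ × ℤ) × (ℤ × ℤ) → ℤ × ℤ := fun q =>
  (q.1.1 + q.2.1 + 3 * q.1.1 * q.2.1 + 3 * q.1.1 * q.2.2 + 3 * q.1.2 * q.2.1,
   q.1.2 + q.2.2 - 3 * q.1.1 * q.2.1 + 3 * q.1.2 * q.2.2)

/-!
Identify `(x, y)` with the Eisenstein integer `(3y + 1) - 3xω`. This is a bijection from `ℤ × ℤ`
onto the primary elements of `ℤ[ω]` (those `≡ 1 mod 3`), it maps `C m` onto the primary elements
of norm `3m + 1`, and it turns `α` into multiplication. For `m = n` and `m = n + 3^k` these norms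
are `3n + 1` and `3n + 1 + 3^(k+1)`, which are coprime because `3n + 1` is prime to `3`. As `ℤ[ω]`
is Euclidean, a primary element whose norm is a product `AB` of coprime integers splits as a
product of elements of norms `A` and `B`; the factors are unique up to units, and only the unit `1`
is primary.
-/

/-- `a + bω`, where `ω² = -1 - ω`. -/
@[ext]
structure Eis where
  re : ℤ
  im : ℤ
deriving DecidableEq

namespace Eis

instance : Zero Eis := ⟨⟨0, 0⟩⟩
instance : One Eis := ⟨⟨1, 0⟩⟩
instance : Add Eis := ⟨fun a b => ⟨a.re + b.re, a.im + b.im⟩⟩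
instance : Neg Eis := ⟨fun a => ⟨-a.re, -a.im⟩⟩
instance : Mul Eis :=
  ⟨fun a b => ⟨a.re * b.re - a.im * b.im, a.re * b.im + a.im * b.re - a.im * b.im⟩⟩

@[simp] theorem zero_re : (0 : Eis).re = 0 := rfl
@[simp] theorem zero_im : (0 : Eis).im = 0 := rfl
@[simp] theorem one_re : (1 : Eis).re = 1 := rfl
@[simp] theorem one_im : (1 : Eis).im = 0 := rfl
@[simp] theorem add_re (a b : Eis) : (a + b).re = a.re + b.re := rfl
@[simp] theorem add_im (a b : Eis) : (a + b).im = a.im + b.im := rfl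
@[simp] theorem neg_re (a : Eis) : (-a).re = -a.re := rfl
@[simp] theorem neg_im (a : Eis) : (-a).im = -a.im := rfl
@[simp] theorem mul_re (a b : Eis) : (a * b).re = a.re * b.re - a.im * b.im := rfl
@[simp] theorem mul_im (a b : Eis) : (a * b).im = a.re * b.im + a.im * b.re - a.im * b.im := rfl

instance commRing : CommRing Eis where
  add_assoc _ _ _ := by ext <;> simp [add_assoc]
  zero_add _ := by ext <;> simp
  add_zero _ := by ext <;> simp
  add_comm _ _ := by ext <;> simp [add_comm]
  neg_add_cancel _ := by ext <;> simp
  mul_assoc _ _ _ := by ext <;> simp only [mul_re, mul_im] <;> ring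
  one_mul _ := by ext <;> simp
  mul_one _ := by ext <;> simp
  left_distrib _ _ _ := by ext <;> simp only [add_re, add_im, mul_re, mul_im] <;> ring
  right_distrib _ _ _ := by ext <;> simp only [add_re, add_im, mul_re, mul_im] <;> ring
  zero_mul _ := by ext <;> simp
  mul_zero _ := by ext <;> simp
  mul_comm _ _ := by ext <;> simp only [mul_re, mul_im] <;> ring
  nsmul := nsmulRec
  zsmul := zsmulRec

@[simp] theorem sub_re (a b : Eis) : (a - b).re = a.re - b.re := by simp [sub_eq_add_neg]
@[simp] theorem sub_im (a b : Eis) : (a - b).im = a.im - b.im := by simp [sub_eq_add_neg]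
@[simp] theorem natCast_re (n : ℕ) : (n : Eis).re = n := by induction n <;> simp_all
@[simp] theorem natCast_im (n : ℕ) : (n : Eis).im = 0 := by induction n <;> simp_all
@[simp] theorem intCast_re (n : ℤ) : (n : Eis).re = n := by cases n <;> simp [Int.negSucc_eq]
@[simp] theorem intCast_im (n : ℤ) : (n : Eis).im = 0 := by cases n <;> simp

instance : Nontrivial Eis := ⟨⟨0, 1, by simp [Eis.ext_iff]⟩⟩

theorem intCast_dvd_iff {n : ℤ} {z : Eis} : (n : Eis) ∣ z ↔ n ∣ z.re ∧ n ∣ z.im := by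
  refine ⟨fun ⟨w, hw⟩ => ⟨⟨w.re, by simp [hw]⟩, ⟨w.im, by simp [hw]⟩⟩, fun ⟨⟨a, ha⟩, ⟨b, hb⟩⟩ => ?_⟩
  exact ⟨⟨a, b⟩, by ext <;> simp [ha, hb]⟩

theorem intCast_dvd_intCast {m n : ℤ} : (m : Eis) ∣ n ↔ m ∣ n := by simp [intCast_dvd_iff]

def norm (z : Eis) : ℤ := z.re ^ 2 - z.re * z.im + z.im ^ 2

theorem norm_mul (a b : Eis) : norm (a * b) = norm a * norm b := by
  simp only [norm, mul_re, mul_im]; ring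

@[simp] theorem norm_intCast (n : ℤ) : norm n = n ^ 2 := by simp [norm]

theorem four_mul_norm (z : Eis) : 4 * norm z = (2 * z.re - z.im) ^ 2 + 3 * z.im ^ 2 := by
  unfold norm; ring

theorem norm_nonneg (z : Eis) : 0 ≤ norm z := by
  nlinarith [four_mul_norm z, sq_nonneg (2 * z.re - z.im), sq_nonneg z.im]

theorem norm_eq_zero_iff {z : Eis} : norm z = 0 ↔ z = 0 := by
  refine ⟨fun h => ?_, fun h => h ▸ rfl⟩
  have h4 := four_mul_norm z
  have him : z.im = 0 := by nlinarith [sq_nonneg (2 * z.re - z.im), sq_nonneg z.im]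
  have hre : z.re = 0 := by rw [him] at h4; nlinarith
  ext <;> assumption

theorem norm_pos {z : Eis} (hz : z ≠ 0) : 0 < norm z :=
  (norm_nonneg z).lt_of_ne (Ne.symm (mt norm_eq_zero_iff.1 hz))

theorem norm_dvd_norm {z w : Eis} (h : z ∣ w) : norm z ∣ norm w := by
  obtain ⟨c, rfl⟩ := h
  exact ⟨norm c, norm_mul z c⟩

/-- `a + bω ↦ a + bω² = (a - b) - bω`. -/
def conj : Eis →+* Eis where
  toFun z := ⟨z.re - z.im, -z.im⟩
  map_one' := rfl
  map_mul' _ _ := by ext <;> simp only [mul_re, mul_im] <;> ring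
  map_zero' := rfl
  map_add' _ _ := by ext <;> simp only [add_re, add_im] <;> ring

@[simp] theorem conj_re (z : Eis) : (conj z).re = z.re - z.im := rfl
@[simp] theorem conj_im (z : Eis) : (conj z).im = -z.im := rfl

theorem norm_conj (z : Eis) : norm (conj z) = norm z := by
  simp only [norm, conj_re, conj_im]; ring

theorem mul_conj (z : Eis) : z * conj z = norm z := by
  ext <;> simp only [mul_re, mul_im, conj_re, conj_im, intCast_re, intCast_im, norm] <;> ring

theorem isCoprime_of_isCoprime_norm {z w : Eis} (h : IsCoprime (norm z) (norm w)) :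
    IsCoprime z w := by
  obtain ⟨u, v, huv⟩ := h
  refine ⟨u * conj z, v * conj w, ?_⟩
  have := congrArg (Int.cast : ℤ → Eis) huv
  push_cast at this
  rw [← mul_conj, ← mul_conj] at this
  linear_combination this

/-- `a / d` rounded to a nearest integer. -/
def roundDiv (a d : ℤ) : ℤ := (2 * a + d) / (2 * d)

theorem two_mul_abs_sub_mul_roundDiv_le (a : ℤ) {d : ℤ} (hd : 0 < d) :
    2 * |a - d * roundDiv a d| ≤ d := by
  have h := Int.mul_ediv_add_emod (2 * a + d) (2 * d)
  have h₁ := Int.emod_nonneg (2 * a + d) (by omega : 2 * d ≠ 0)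
  have h₂ := Int.emod_lt_of_pos (2 * a + d) (by omega : 0 < 2 * d)
  have := abs_le.2 (⟨by unfold roundDiv; linarith, by unfold roundDiv; linarith⟩ :
    -d ≤ 2 * (a - d * roundDiv a d) ∧ 2 * (a - d * roundDiv a d) ≤ d)
  rwa [abs_mul, abs_two] at this

theorem norm_lt_sq_of_two_mul_abs_le {w : Eis} {d : ℤ} (hre : 2 * |w.re| ≤ d)
    (him : 2 * |w.im| ≤ d) (hd : 0 < d) :
    norm w < d ^ 2 := by
  have hmul : 2 * |w.re| * (2 * |w.im|) ≤ d * d := mul_le_mul hre him (by positivity) hd.le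
  have hsq_re : 2 * |w.re| * (2 * |w.re|) ≤ d * d := mul_le_mul hre hre (by positivity) hd.le
  have hsq_im : 2 * |w.im| * (2 * |w.im|) ≤ d * d := mul_le_mul him him (by positivity) hd.le
  have hcross : -(w.re * w.im) ≤ |w.re| * |w.im| := abs_mul w.re w.im ▸ neg_le_abs _
  have := abs_mul_abs_self w.re
  have := abs_mul_abs_self w.im
  unfold norm
  nlinarith

/-- `x / y = x * conj y / norm y`, with both coordinates rounded. -/
def quot (x y : Eis) : Eis :=
  ⟨roundDiv (x * conj y).re (norm y), roundDiv (x * conj y).im (norm y)⟩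

theorem quot_re (x y : Eis) : (quot x y).re = roundDiv (x * conj y).re (norm y) := rfl
theorem quot_im (x y : Eis) : (quot x y).im = roundDiv (x * conj y).im (norm y) := rfl

theorem norm_sub_mul_quot_lt (x : Eis) {y : Eis} (hy : y ≠ 0) :
    norm (x - y * quot x y) < norm y := by
  have hd := norm_pos hy
  have hscale : norm (x - y * quot x y) * norm y = norm (x * conj y - norm y * quot x y) := by
    calc norm (x - y * quot x y) * norm y = norm ((x - y * quot x y) * conj y) := by
          rw [norm_mul, norm_conj]
      _ = _ := by rw [sub_mul, mul_right_comm y, mul_conj]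
  have := norm_lt_sq_of_two_mul_abs_le (w := x * conj y - norm y * quot x y)
    (by simpa only [sub_re, mul_re, intCast_re, intCast_im, zero_mul, sub_zero, quot_re]
      using two_mul_abs_sub_mul_roundDiv_le _ hd)
    (by simpa only [sub_im, mul_im, intCast_re, intCast_im, zero_mul, add_zero, sub_zero, quot_im]
      using two_mul_abs_sub_mul_roundDiv_le _ hd) hd
  nlinarith

instance : EuclideanDomain Eis where
  quotient := quot
  quotient_zero x := by ext <;> simp [quot, roundDiv, norm]
  remainder x y := x - y * quot x y
  quotient_mul_add_remainder_eq x y := add_sub_cancel _ _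
  r := InvImage (· < ·) fun z => (norm z).toNat
  r_wellFounded := InvImage.wf _ wellFounded_lt
  remainder_lt x y hy := by
    have := norm_sub_mul_quot_lt x hy
    have := norm_pos hy
    simp only [InvImage]
    omega
  mul_left_not_lt x y hy := by
    have := norm_pos hy
    have := norm_nonneg x
    simp only [InvImage, norm_mul, not_lt]
    apply Int.toNat_le_toNat
    nlinarith

/-- The gcd `δ` of `γ` and `A` has norm `A`: `A ∣ norm δ` because the ideals satisfy
`(γ, A) (conj γ, A) = A (B, γ, conj γ, A) = (A)`, and `norm δ ∣ gcd (A * B, A * A) = A`. -/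
theorem exists_dvd_norm_eq {γ : Eis} {A B : ℤ} (hA : 0 < A) (hAB : IsCoprime A B)
    (hγ : norm γ = A * B) : ∃ δ, δ ∣ γ ∧ norm δ = A := by
  have hbezout := EuclideanDomain.gcd_eq_gcd_ab γ (A : Eis)
  have hδγ := EuclideanDomain.gcd_dvd_left γ (A : Eis)
  have hδA := EuclideanDomain.gcd_dvd_right γ (A : Eis)
  generalize EuclideanDomain.gcdA γ (A : Eis) = s at hbezout
  generalize EuclideanDomain.gcdB γ (A : Eis) = t at hbezout
  generalize EuclideanDomain.gcd γ (A : Eis) = δ at hbezout hδγ hδA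
  refine ⟨δ, hδγ, ?_⟩
  obtain ⟨m, hm⟩ : A ∣ norm δ := by
    rw [← intCast_dvd_intCast, ← mul_conj, hbezout]
    have hγ' : γ * conj γ = A * B := by rw [mul_conj, hγ]; push_cast; ring
    refine ⟨B * s * conj s + γ * s * conj t + conj γ * conj s * t + A * t * conj t, ?_⟩
    simp only [map_add, map_mul, map_intCast]
    linear_combination s * conj s * hγ'
  have hmB : m ∣ B := by
    have := hγ ▸ hm ▸ norm_dvd_norm hδγ
    exact (mul_dvd_mul_iff_left hA.ne').1 this
  have hmA : m ∣ A := by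
    have := hm ▸ norm_dvd_norm hδA
    rw [norm_intCast, sq] at this
    exact (mul_dvd_mul_iff_left hA.ne').1 this
  have hδ := norm_nonneg δ
  rcases Int.isUnit_iff.1 (hAB.isUnit_of_dvd' hmA hmB) with rfl | rfl
  · simpa using hm
  · nlinarith

def IsPrimary (z : Eis) : Prop := (3 : Eis) ∣ z - 1

theorem isPrimary_iff {z : Eis} : IsPrimary z ↔ 3 ∣ z.re - 1 ∧ 3 ∣ z.im := by
  rw [IsPrimary, ← Int.cast_ofNat, intCast_dvd_iff, sub_re, sub_im, one_re, one_im, sub_zero]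

theorem IsPrimary.of_mul {z w : Eis} (hz : IsPrimary z) (hzw : IsPrimary (z * w)) :
    IsPrimary w := by
  rw [IsPrimary, show w - 1 = (z * w - 1) - (z - 1) * w by ring]
  exact dvd_sub hzw (hz.mul_right w)

theorem IsPrimary.three_dvd_norm_sub_one {z : Eis} (hz : IsPrimary z) : 3 ∣ norm z - 1 := by
  obtain ⟨⟨a, ha⟩, ⟨b, hb⟩⟩ := isPrimary_iff.1 hz
  exact ⟨2 * a - b + 3 * (a ^ 2 - a * b + b ^ 2), by
    rw [norm, show z.re = 3 * a + 1 by omega, hb]; ring⟩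

theorem IsPrimary.ne_zero {z : Eis} (hz : IsPrimary z) : z ≠ 0 := by
  rintro rfl
  have := hz.three_dvd_norm_sub_one
  norm_num [norm] at this

theorem IsPrimary.eq_one_of_norm_eq_one {u : Eis} (hu : IsPrimary u) (h : norm u = 1) :
    u = 1 := by
  obtain ⟨⟨a, ha⟩, ⟨b, hb⟩⟩ := isPrimary_iff.1 hu
  have h4 := four_mul_norm u
  rw [h, hb] at h4
  have hb0 : b = 0 := (sq_nonpos_iff b).1 (by nlinarith [sq_nonneg (2 * u.re - 3 * b)])
  have hre : u.re ^ 2 = 1 := by rw [hb0] at h4; linarith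
  ext
  · rcases sq_eq_one_iff.1 hre with h1 | h1 <;> rw [one_re] <;> omega
  · rw [one_im, hb, hb0, mul_zero]

/-- The condition `3 ∤ norm z` says `z.re + z.im ≢ 0 (mod 3)`, and the six units represent the
six residue classes of `(ℤ[ω] / 3)ˣ`. -/
theorem exists_norm_eq_one_isPrimary_mul {z : Eis} (hz : ¬ 3 ∣ norm z) :
    ∃ u, norm u = 1 ∧ IsPrimary (z * u) := by
  have hsum : ¬ 3 ∣ z.re + z.im := fun ⟨c, hc⟩ =>
    hz ⟨3 * c ^ 2 - z.re * z.im, by unfold norm; linear_combination (z.re + z.im + 3 * c) * hc⟩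
  rcases (by omega : z.re % 3 = 0 ∨ z.re % 3 = 1 ∨ z.re % 3 = 2) with h | h | h <;>
    rcases (by omega : (z.re + z.im) % 3 = 1 ∨ (z.re + z.im) % 3 = 2) with h' | h' <;>
    first
    | exact ⟨⟨1, 0⟩, rfl, isPrimary_iff.2 (by simp only [mul_re, mul_im]; omega)⟩
    | exact ⟨⟨-1, 0⟩, rfl, isPrimary_iff.2 (by simp only [mul_re, mul_im]; omega)⟩
    | exact ⟨⟨0, 1⟩, rfl, isPrimary_iff.2 (by simp only [mul_re, mul_im]; omega)⟩
    | exact ⟨⟨0, -1⟩, rfl, isPrimary_iff.2 (by simp only [mul_re, mul_im]; omega)⟩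
    | exact ⟨⟨1, 1⟩, rfl, isPrimary_iff.2 (by simp only [mul_re, mul_im]; omega)⟩
    | exact ⟨⟨-1, -1⟩, rfl, isPrimary_iff.2 (by simp only [mul_re, mul_im]; omega)⟩

theorem IsPrimary.eq_of_dvd_of_norm_eq {α γ : Eis} (hα : IsPrimary α) (hγ : IsPrimary γ)
    (hdvd : α ∣ γ) (hnorm : norm α = norm γ) : α = γ := by
  obtain ⟨u, rfl⟩ := hdvd
  have hu : norm u = 1 := by
    rw [norm_mul] at hnorm
    exact (mul_eq_left₀ (norm_pos hα.ne_zero).ne').1 hnorm.symm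
  rw [(hα.of_mul hγ).eq_one_of_norm_eq_one hu, mul_one]

theorem IsPrimary.eq_of_mul_eq_mul {α β γ δ : Eis} (hα : IsPrimary α) (hγ : IsPrimary γ)
    (hαδ : IsCoprime α δ) (hnorm : norm α = norm γ) (h : α * β = γ * δ) : α = γ ∧ β = δ := by
  obtain rfl : α = γ :=
    hα.eq_of_dvd_of_norm_eq hγ (hαδ.dvd_of_dvd_mul_right (h ▸ dvd_mul_right α β)) hnorm
  exact ⟨rfl, mul_left_cancel₀ hα.ne_zero h⟩

theorem IsPrimary.exists_mul_eq {γ : Eis} (hγ : IsPrimary γ) {A B : ℤ} (hA : 0 < A)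
    (hAB : IsCoprime A B) (hN : norm γ = A * B) :
    ∃ α β, IsPrimary α ∧ IsPrimary β ∧ norm α = A ∧ norm β = B ∧ α * β = γ := by
  obtain ⟨δ, ⟨ε, rfl⟩, hδ⟩ := exists_dvd_norm_eq hA hAB hN
  have h3 : ¬ 3 ∣ norm δ := fun h => by
    have h₁ : 3 ∣ norm (δ * ε) := norm_mul δ ε ▸ h.mul_right _
    have h₂ := hγ.three_dvd_norm_sub_one
    omega
  obtain ⟨u, hu, hδu⟩ := exists_norm_eq_one_isPrimary_mul h3
  have hmul : δ * u * (ε * conj u) = δ * ε := by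
    linear_combination (δ * ε) * (mul_conj u).trans (by rw [hu, Int.cast_one])
  have hε : norm ε = B := by
    rw [norm_mul, hδ] at hN
    exact mul_left_cancel₀ hA.ne' hN
  refine ⟨δ * u, ε * conj u, hδu, hδu.of_mul (hmul ▸ hγ), ?_, ?_, hmul⟩
  · rw [norm_mul, hδ, hu, mul_one]
  · rw [norm_mul, norm_conj, hu, mul_one, hε]

end Eis

open Eis

def toEis (p : ℤ × ℤ) : Eis := ⟨3 * p.2 + 1, -(3 * p.1)⟩

theorem toEis_injective : Function.Injective toEis := by
  rintro ⟨x, y⟩ ⟨x', y'⟩ h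
  simp only [toEis, Eis.mk.injEq] at h
  ext <;> dsimp <;> omega

theorem isPrimary_toEis (p : ℤ × ℤ) : IsPrimary (toEis p) :=
  isPrimary_iff.2 ⟨⟨p.2, by simp [toEis]⟩, ⟨-p.1, by simp [toEis]⟩⟩

theorem Eis.IsPrimary.exists_toEis_eq {z : Eis} (hz : IsPrimary z) : ∃ p, toEis p = z := by
  obtain ⟨⟨a, ha⟩, ⟨b, hb⟩⟩ := isPrimary_iff.1 hz
  exact ⟨(-b, a), by ext <;> dsimp [toEis] <;> omega⟩

theorem toEis_alphaMap (p q : ℤ × ℤ) : toEis (alphaMap (p, q)) = toEis p * toEis q := by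
  ext <;> simp only [toEis, alphaMap, mul_re, mul_im] <;> ring

theorem mem_C_iff {m : ℤ} {p : ℤ × ℤ} : p ∈ C m ↔ Eis.norm (toEis p) = 3 * m + 1 := by
  simp only [C, Set.mem_ofPred_eq, Eis.norm, toEis]
  constructor <;> intro h <;> linarith

theorem mapsTo_alphaMap (a b : ℤ) :
    Set.MapsTo alphaMap (C a ×ˢ C b) (C (3 * a * b + a + b)) := by
  rintro ⟨p, q⟩ ⟨hp, hq⟩
  rw [mem_C_iff] at hp hq ⊢
  rw [toEis_alphaMap, norm_mul, hp, hq]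
  ring

theorem injOn_alphaMap {a b : ℤ} (h : IsCoprime (3 * a + 1) (3 * b + 1)) :
    Set.InjOn alphaMap (C a ×ˢ C b) := by
  rintro ⟨p, q⟩ ⟨hp, hq⟩ ⟨p', q'⟩ ⟨hp', hq'⟩ heq
  rw [mem_C_iff] at hp hq hp' hq'
  have hcop : IsCoprime (toEis p) (toEis q') := isCoprime_of_isCoprime_norm (by rwa [hp, hq'])
  obtain ⟨h₁, h₂⟩ := (isPrimary_toEis p).eq_of_mul_eq_mul (isPrimary_toEis p') hcop
    (hp.trans hp'.symm) (by rw [← toEis_alphaMap, ← toEis_alphaMap, heq])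
  rw [toEis_injective h₁, toEis_injective h₂]

theorem surjOn_alphaMap {a b : ℤ} (ha : 0 ≤ a) (h : IsCoprime (3 * a + 1) (3 * b + 1)) :
    Set.SurjOn alphaMap (C a ×ˢ C b) (C (3 * a * b + a + b)) := by
  intro r hr
  rw [mem_C_iff] at hr
  obtain ⟨α, β, hα, hβ, hαn, hβn, hαβ⟩ :=
    (isPrimary_toEis r).exists_mul_eq (by omega) h (by rw [hr]; ring)
  obtain ⟨p, rfl⟩ := hα.exists_toEis_eq
  obtain ⟨q, rfl⟩ := hβ.exists_toEis_eq
  exact ⟨(p, q), ⟨mem_C_iff.2 hαn, mem_C_iff.2 hβn⟩, toEis_injective (by rw [toEis_alphaMap, hαβ])⟩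

theorem bijOn_alphaMap {a b : ℤ} (ha : 0 ≤ a) (h : IsCoprime (3 * a + 1) (3 * b + 1)) :
    Set.BijOn alphaMap (C a ×ˢ C b) (C (3 * a * b + a + b)) :=
  ⟨mapsTo_alphaMap a b, injOn_alphaMap h, surjOn_alphaMap ha h⟩

theorem stmt16_general (n k : ℕ) :
    Set.BijOn alphaMap (C (n : ℤ) ×ˢ C ((n + 3 ^ k : ℕ) : ℤ))
      (C ((3 * n ^ 2 + (3 ^ (k + 1) + 2) * n + 3 ^ k : ℕ) : ℤ)) := by
  have hcop : IsCoprime (3 * (n : ℤ) + 1) (3 * ((n + 3 ^ k : ℕ) : ℤ) + 1) := by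
    have h := (IsCoprime.pow_right (n := k + 1) ⟨1, -n, by ring⟩ :
      IsCoprime (3 * (n : ℤ) + 1) (3 ^ (k + 1))).add_mul_left_right 1
    rwa [show (3 : ℤ) ^ (k + 1) + (3 * n + 1) * 1 = 3 * ((n + 3 ^ k : ℕ) : ℤ) + 1 by
      push_cast; ring] at h
  convert bijOn_alphaMap (Int.natCast_nonneg n) hcop using 2
  push_cast; ring

theorem stmt16 (n k : ℕ) (hn : 1 ≤ n) :
    Set.BijOn alphaMap (C (n : ℤ) ×ˢ C ((n + 3 ^ k : ℕ) : ℤ))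
      (C ((3 * n ^ 2 + (3 ^ (k + 1) + 2) * n + 3 ^ k : ℕ) : ℤ)) :=
  stmt16_general n k
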